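/- With the notation of the convexity lemma for mutual information, equality I(S,Q) = λI(S,P) + (1−λ)I(S,P̃) holds (for 0 < λ < 1) if and only if p_{ij}·∑_k p̃_{kj} = p̃_{ij}·∑_k p_{kj} for all i and j. -/

import Mathlib

open scoped ComplexOrder

/-- `H(u) = u·log₂ u`. -/
noncomputable def H (u : ℝ) : ℝ := u * Real.logb 2 u

/-- Mutual information of an ensemble `(p, ρ)` and a POVM `P`. -/
noncomputable def mutualInfo {d m : ℕ} {ι : Type*} [Fintype ι]
    (p : Fin m → ℝ) (ρ : Fin m → Matrix (Fin d) (Fin d) ℂ)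
    (P : ι → Matrix (Fin d) (Fin d) ℂ) : ℝ :=
  (∑ i, ∑ j, H (p i * ((P j * ρ i).trace).re))
    - (∑ i, H (∑ j, p i * ((P j * ρ i).trace).re))
    - (∑ j, H (∑ i, p i * ((P j * ρ i).trace).re))

/-- `Dfun a s = a log a − a log s` (natural logarithm). -/
noncomputable def Dfun (a s : ℝ) : ℝ := a * Real.log a - a * Real.log s

lemma Dfun_smul {c a s : ℝ} (hc : 0 < c) (ha : 0 ≤ a) (has : a ≤ s) :
    Dfun (c*a) (c*s) = c * Dfun a s := by
  rcases eq_or_lt_of_le ha with h|h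
  · simp [Dfun, ← h]
  · have hs : 0 < s := lt_of_lt_of_le h has
    simp only [Dfun, Real.log_mul (ne_of_gt hc) (ne_of_gt h),
      Real.log_mul (ne_of_gt hc) (ne_of_gt hs)]
    ring

lemma trace_re_nonneg' {d : ℕ} {M : Matrix (Fin d) (Fin d) ℂ} (hM : M.PosSemidef) :
    0 ≤ M.trace.re := by
  rw [Matrix.trace, Complex.re_sum]
  refine Finset.sum_nonneg fun i _ => ?_
  have := hM.re_dotProduct_nonneg (Pi.single i 1)
  simpa [Matrix.mulVec_single, dotProduct, Pi.single_apply, apply_ite,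
    Finset.sum_ite_eq'] using this

open scoped MatrixOrder in
lemma trace_mul_re_nonneg' {d : ℕ} {A B : Matrix (Fin d) (Fin d) ℂ}
    (hA : A.PosSemidef) (hB : B.PosSemidef) : 0 ≤ (A * B).trace.re := by
  obtain hC := Matrix.nonneg_iff_posSemidef.mp (CFC.sqrt_nonneg B)
  have hCC : CFC.sqrt B * CFC.sqrt B = B := CFC.sqrt_mul_sqrt_self B hB.nonneg
  have h2 := hA.mul_mul_conjTranspose_same (CFC.sqrt B)
  rw [hC.isHermitian.eq] at h2
  set C := CFC.sqrt B with hCdef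
  rw [← hCC, ← Matrix.mul_assoc, Matrix.trace_mul_comm, ← Matrix.mul_assoc]
  exact trace_re_nonneg' h2

set_option maxHeartbeats 1000000 in
lemma core {l a s b t : ℝ} (hl0 : 0 < l) (hl1 : l < 1)
    (ha : 0 ≤ a) (has : a ≤ s) (hb : 0 ≤ b) (hbt : b ≤ t) :
    (0 ≤ l * Dfun a s + (1-l) * Dfun b t - Dfun (l*a+(1-l)*b) (l*s+(1-l)*t)) ∧
    (l * Dfun a s + (1-l) * Dfun b t - Dfun (l*a+(1-l)*b) (l*s+(1-l)*t) = 0 ↔ a*t = b*s) := by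
  have hm : 0 < 1 - l := by linarith
  have main : (l * Dfun a s + (1-l) * Dfun b t - Dfun (l*a+(1-l)*b) (l*s+(1-l)*t) = 0
      ∧ a*t = b*s)
    ∨ (0 < l * Dfun a s + (1-l) * Dfun b t - Dfun (l*a+(1-l)*b) (l*s+(1-l)*t)
      ∧ a*t ≠ b*s) := by
    rcases eq_or_lt_of_le ha with hA0|hA0
    · -- a = 0
      rcases eq_or_lt_of_le hb with hB0|hB0
      · -- b = 0
        left
        constructor
        · simp [Dfun, ← hA0, ← hB0]
        · rw [← hA0, ← hB0]; ring
      · -- b > 0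
        have ht : 0 < t := lt_of_lt_of_le hB0 hbt
        rcases eq_or_lt_of_le (hA0 ▸ has : (0:ℝ) ≤ s) with hS0|hS0
        · -- s = 0
          left
          constructor
          · rw [← hA0, ← hS0]
            rw [show l*0 + (1-l)*b = (1-l)*b by ring, show l*0 + (1-l)*t = (1-l)*t by ring,
              Dfun_smul hm hb hbt]
            simp [Dfun]
          · rw [← hA0, ← hS0]; ring
        · -- s > 0 : strict
          right
          have hbb : 0 < (1-l)*b := mul_pos hm hB0
          have hSS : 0 < l*s + (1-l)*t := by positivity
          have hAA : l*0 + (1-l)*b = (1-l)*b := by ring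
          have hgt : (1-l)*t < l*s + (1-l)*t := by nlinarith
          constructor
          · have e2 : Real.log ((1-l)*b) = Real.log (1-l) + Real.log b :=
              Real.log_mul (ne_of_gt hm) (ne_of_gt hB0)
            have e3 : Real.log ((1-l)*t) = Real.log (1-l) + Real.log t :=
              Real.log_mul (ne_of_gt hm) (ne_of_gt ht)
            have e4 : Real.log ((1-l)*t) < Real.log (l*s+(1-l)*t) :=
              Real.log_lt_log (by positivity) hgt
            rw [← hA0]
            have E : l * Dfun 0 s + (1-l) * Dfun b t
                  - Dfun (l*0+(1-l)*b) (l*s+(1-l)*t)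
                = (1-l)*b*(Real.log (l*s+(1-l)*t) - Real.log ((1-l)*t)) := by
              simp only [Dfun]
              rw [show l*0+(1-l)*b = (1-l)*b by ring, e2, e3]
              ring
            rw [E]
            exact mul_pos hbb (sub_pos.mpr e4)
          · rw [← hA0]
            intro hc
            nlinarith
    · -- a > 0
      have hs : 0 < s := lt_of_lt_of_le hA0 has
      rcases eq_or_lt_of_le hb with hB0|hB0
      · -- b = 0
        rcases eq_or_lt_of_le (hB0 ▸ hbt : (0:ℝ) ≤ t) with hT0|hT0
        · -- t = 0
          left
          constructor
          · rw [← hB0, ← hT0]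
            rw [show l*a + (1-l)*0 = l*a by ring, show l*s + (1-l)*0 = l*s by ring,
              Dfun_smul hl0 ha has]
            simp [Dfun]
          · rw [← hB0, ← hT0]; ring
        · -- t > 0 : strict
          right
          have haa : 0 < l*a := mul_pos hl0 hA0
          have hSS : 0 < l*s + (1-l)*t := by positivity
          have hgt : l*s < l*s + (1-l)*t := by nlinarith
          constructor
          · have e2 : Real.log (l*a) = Real.log l + Real.log a :=
              Real.log_mul (ne_of_gt hl0) (ne_of_gt hA0)
            have e3 : Real.log (l*s) = Real.log l + Real.log s :=
              Real.log_mul (ne_of_gt hl0) (ne_of_gt hs)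
            have e4 : Real.log (l*s) < Real.log (l*s+(1-l)*t) :=
              Real.log_lt_log (by positivity) hgt
            rw [← hB0]
            have E : l * Dfun a s + (1-l) * Dfun 0 t
                  - Dfun (l*a+(1-l)*0) (l*s+(1-l)*t)
                = l*a*(Real.log (l*s+(1-l)*t) - Real.log (l*s)) := by
              simp only [Dfun]
              rw [show l*a+(1-l)*0 = l*a by ring, e2, e3]
              ring
            rw [E]
            exact mul_pos haa (sub_pos.mpr e4)
          · rw [← hB0]
            intro hc
            nlinarith
      · -- a > 0, b > 0 : main case
        have ht : 0 < t := lt_of_lt_of_le hB0 hbt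
        obtain ⟨A, hAdef⟩ : ∃ x : ℝ, x = l*a + (1-l)*b := ⟨_, rfl⟩
        obtain ⟨S, hSdef⟩ : ∃ x : ℝ, x = l*s + (1-l)*t := ⟨_, rfl⟩
        have hAA : 0 < A := by rw [hAdef]; positivity
        have hSS : 0 < S := by rw [hSdef]; positivity
        rw [← hAdef, ← hSdef]
        have wA : A * Real.log A = l*a*Real.log A + (1-l)*b*Real.log A := by
          rw [hAdef]; ring
        have wS : A * Real.log S = l*a*Real.log S + (1-l)*b*Real.log S := by
          rw [hAdef]; ring
        by_cases hcond : a*t = b*s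
        · left
          refine ⟨?_, hcond⟩
          have h1 : A*s = S*a := by rw [hAdef, hSdef]; nlinarith [hcond]
          have h2 : A*t = S*b := by rw [hAdef, hSdef]; nlinarith [hcond]
          have k1 : Real.log A + Real.log s = Real.log S + Real.log a := by
            rw [← Real.log_mul (ne_of_gt hAA) (ne_of_gt hs),
              ← Real.log_mul (ne_of_gt hSS) (ne_of_gt hA0), h1]
          have k2 : Real.log A + Real.log t = Real.log S + Real.log b := by
            rw [← Real.log_mul (ne_of_gt hAA) (ne_of_gt ht),
              ← Real.log_mul (ne_of_gt hSS) (ne_of_gt hB0), h2]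
          have w1 : l*a*(Real.log A + Real.log s) = l*a*(Real.log S + Real.log a) := by
            rw [k1]
          have w2 : (1-l)*b*(Real.log A + Real.log t) = (1-l)*b*(Real.log S + Real.log b) := by
            rw [k2]
          simp only [Dfun]
          ring_nf
          ring_nf at w1 w2 wA wS
          linarith [w1, w2, wA, wS]
        · right
          refine ⟨?_, hcond⟩
          have hz1 : (0:ℝ) < A*s/(a*S) := div_pos (mul_pos hAA hs) (mul_pos hA0 hSS)
          have hz2 : (0:ℝ) < A*t/(b*S) := div_pos (mul_pos hAA ht) (mul_pos hB0 hSS)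
          have hne : A*s/(a*S) ≠ 1 := by
            intro hEq
            rw [div_eq_one_iff_eq (ne_of_gt (mul_pos hA0 hSS))] at hEq
            apply hcond
            rw [hAdef, hSdef] at hEq
            have h5 : (1-l)*(b*s) = (1-l)*(a*t) := by ring_nf; ring_nf at hEq; linarith
            have h6 := mul_left_cancel₀ (ne_of_gt hm) h5
            linarith
          have k1 : Real.log (A*s/(a*S)) < A*s/(a*S) - 1 :=
            Real.log_lt_sub_one_of_pos hz1 hne
          have k2 : Real.log (A*t/(b*S)) ≤ A*t/(b*S) - 1 :=
            Real.log_le_sub_one_of_pos hz2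
          have e1 : Real.log (A*s/(a*S)) =
              Real.log A + Real.log s - (Real.log a + Real.log S) := by
            rw [Real.log_div (ne_of_gt (mul_pos hAA hs)) (ne_of_gt (mul_pos hA0 hSS)),
              Real.log_mul (ne_of_gt hAA) (ne_of_gt hs),
              Real.log_mul (ne_of_gt hA0) (ne_of_gt hSS)]
          have e2 : Real.log (A*t/(b*S)) =
              Real.log A + Real.log t - (Real.log b + Real.log S) := by
            rw [Real.log_div (ne_of_gt (mul_pos hAA ht)) (ne_of_gt (mul_pos hB0 hSS)),
              Real.log_mul (ne_of_gt hAA) (ne_of_gt ht),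
              Real.log_mul (ne_of_gt hB0) (ne_of_gt hSS)]
          have v1 : l*a*(A*s/(a*S)) = l*s*A/S := by
            field_simp
          have v2 : (1-l)*b*(A*t/(b*S)) = (1-l)*t*A/S := by
            field_simp
          have v3 : l*s*A/S + (1-l)*t*A/S = A := by
            rw [hAdef, hSdef]
            field_simp
          have w1 : l*a*Real.log (A*s/(a*S)) < l*a*(A*s/(a*S) - 1) :=
            mul_lt_mul_of_pos_left k1 (mul_pos hl0 hA0)
          have w2 : (1-l)*b*Real.log (A*t/(b*S)) ≤ (1-l)*b*(A*t/(b*S) - 1) :=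
            mul_le_mul_of_nonneg_left k2 (le_of_lt (mul_pos hm hB0))
          have goalform : l * Dfun a s + (1-l) * Dfun b t - Dfun A S
              = -(l*a*Real.log (A*s/(a*S))) - (1-l)*b*Real.log (A*t/(b*S)) := by
            rw [e1, e2]
            simp only [Dfun]
            ring_nf
            ring_nf at wA wS
            linarith [wA, wS]
          rw [goalform]
          linarith [w1, w2, v1, v2, v3]
  constructor
  · rcases main with ⟨h, _⟩|⟨h, _⟩ <;> linarith
  · rcases main with ⟨h, h2⟩|⟨h, h2⟩
    · exact iff_of_true h h2
    · exact iff_of_false (by linarith) h2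

lemma mi_eq {d m n : ℕ} (p : Fin m → ℝ)
    (ρ : Fin m → Matrix (Fin d) (Fin d) ℂ) (hρ : ∀ i, (ρ i).trace = 1)
    (Q : Fin n → Matrix (Fin d) (Fin d) ℂ) (hQ : ∑ j, Q j = 1) :
    mutualInfo p ρ Q = (∑ j, ∑ i, Dfun (p i * ((Q j * ρ i).trace).re)
        (∑ k, p k * ((Q j * ρ k).trace).re)) / Real.log 2 - ∑ i, H (p i) := by
  have hlog2 : Real.log 2 ≠ 0 := ne_of_gt (Real.log_pos one_lt_two)
  have hrow : ∀ i, ∑ j, p i * ((Q j * ρ i).trace).re = p i := by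
    intro i
    rw [← Finset.mul_sum]
    have h1 : ∑ j, ((Q j * ρ i).trace) = 1 := by
      rw [← Matrix.trace_sum, ← Finset.sum_mul, hQ, Matrix.one_mul, hρ i]
    have h2 : ∑ j, ((Q j * ρ i).trace).re = 1 := by
      rw [← Complex.re_sum, h1, Complex.one_re]
    rw [h2, mul_one]
  have hH : ∀ u : ℝ, H u * Real.log 2 = u * Real.log u := by
    intro u; rw [H, Real.logb]; field_simp
  have main : ∑ j, ∑ i, Dfun (p i * ((Q j * ρ i).trace).re)
        (∑ k, p k * ((Q j * ρ k).trace).re)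
      = ((∑ i, ∑ j, H (p i * ((Q j * ρ i).trace).re))
          - ∑ j, H (∑ k, p k * ((Q j * ρ k).trace).re)) * Real.log 2 := by
    have step1 : ∑ j, ∑ i, Dfun (p i * ((Q j * ρ i).trace).re)
          (∑ k, p k * ((Q j * ρ k).trace).re)
        = ∑ j, ((∑ i, (p i * ((Q j * ρ i).trace).re)
              * Real.log (p i * ((Q j * ρ i).trace).re))
            - (∑ k, p k * ((Q j * ρ k).trace).re)
              * Real.log (∑ k, p k * ((Q j * ρ k).trace).re)) :=
      Finset.sum_congr rfl fun j _ => by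
        simp only [Dfun, Finset.sum_sub_distrib, ← Finset.sum_mul]
    rw [step1, Finset.sum_sub_distrib, sub_mul, Finset.sum_mul, Finset.sum_mul]
    simp only [Finset.sum_mul, hH]
    rw [Finset.sum_comm]
  rw [mutualInfo, main, mul_div_cancel_right₀ _ hlog2]
  have hmid : ∑ i, H (∑ j, p i * ((Q j * ρ i).trace).re) = ∑ i, H (p i) :=
    Finset.sum_congr rfl fun i _ => by rw [hrow i]
  rw [hmid]
  ring

lemma abstract (m n : ℕ) (l : ℝ) (hl0 : 0 < l) (hl1 : l < 1)
    (q qt : Fin m → Fin n → ℝ) (hq : ∀ i j, 0 ≤ q i j) (hqt : ∀ i j, 0 ≤ qt i j)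
    (C L : ℝ) (hL : 0 < L) :
    ((∑ j, ∑ i, Dfun (l * q i j + (1-l) * qt i j)
        (∑ k, (l * q k j + (1-l) * qt k j))) / L - C
      = l * ((∑ j, ∑ i, Dfun (q i j) (∑ k, q k j)) / L - C)
        + (1-l) * ((∑ j, ∑ i, Dfun (qt i j) (∑ k, qt k j)) / L - C))
    ↔ ∀ i j, q i j * (∑ k, qt k j) = qt i j * (∑ k, q k j) := by
  have hsum : ∀ j, ∑ k, (l * q k j + (1-l) * qt k j)
      = l * (∑ k, q k j) + (1-l) * (∑ k, qt k j) := by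
    intro j; rw [Finset.sum_add_distrib, ← Finset.mul_sum, ← Finset.mul_sum]
  have hg : ∀ j i, (0 ≤ l * Dfun (q i j) (∑ k, q k j)
        + (1-l) * Dfun (qt i j) (∑ k, qt k j)
        - Dfun (l * q i j + (1-l) * qt i j)
            (l * (∑ k, q k j) + (1-l) * (∑ k, qt k j))) ∧
      (l * Dfun (q i j) (∑ k, q k j) + (1-l) * Dfun (qt i j) (∑ k, qt k j)
        - Dfun (l * q i j + (1-l) * qt i j)
            (l * (∑ k, q k j) + (1-l) * (∑ k, qt k j)) = 0
        ↔ q i j * (∑ k, qt k j) = qt i j * (∑ k, q k j)) := fun j i =>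
    core hl0 hl1 (hq i j)
      (Finset.single_le_sum (fun k _ => hq k j) (Finset.mem_univ i)) (hqt i j)
      (Finset.single_le_sum (fun k _ => hqt k j) (Finset.mem_univ i))
  have hXYZ : ∑ j, ∑ i, (l * Dfun (q i j) (∑ k, q k j)
        + (1-l) * Dfun (qt i j) (∑ k, qt k j)
        - Dfun (l * q i j + (1-l) * qt i j)
            (l * (∑ k, q k j) + (1-l) * (∑ k, qt k j)))
      = l * (∑ j, ∑ i, Dfun (q i j) (∑ k, q k j))
        + (1-l) * (∑ j, ∑ i, Dfun (qt i j) (∑ k, qt k j))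
        - (∑ j, ∑ i, Dfun (l * q i j + (1-l) * qt i j)
            (l * (∑ k, q k j) + (1-l) * (∑ k, qt k j))) := by
    simp only [Finset.sum_sub_distrib, Finset.sum_add_distrib, Finset.mul_sum]
  simp only [hsum]
  constructor
  · intro h
    have h0 : ∑ j, ∑ i, (l * Dfun (q i j) (∑ k, q k j)
        + (1-l) * Dfun (qt i j) (∑ k, qt k j)
        - Dfun (l * q i j + (1-l) * qt i j)
            (l * (∑ k, q k j) + (1-l) * (∑ k, qt k j))) = 0 := by
      rw [hXYZ]
      field_simp [hL.ne'] at h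
      linarith
    have hpt := (Finset.sum_eq_zero_iff_of_nonneg
      (fun j _ => Finset.sum_nonneg fun i _ => (hg j i).1)).mp h0
    intro i j
    have h2 := (Finset.sum_eq_zero_iff_of_nonneg
      (fun i _ => (hg j i).1)).mp (hpt j (Finset.mem_univ j)) i (Finset.mem_univ i)
    exact ((hg j i).2).mp h2
  · intro h
    have h0 : ∑ j, ∑ i, (l * Dfun (q i j) (∑ k, q k j)
        + (1-l) * Dfun (qt i j) (∑ k, qt k j)
        - Dfun (l * q i j + (1-l) * qt i j)
            (l * (∑ k, q k j) + (1-l) * (∑ k, qt k j))) = 0 :=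
      Finset.sum_eq_zero fun j _ => Finset.sum_eq_zero fun i _ =>
        ((hg j i).2).mpr (h i j)
    rw [hXYZ] at h0
    field_simp [hL.ne']
    linarith

/-- Equality condition in the convexity lemma for mutual information: for
`0 < λ < 1`, equality `I(S,Q) = λI(S,P) + (1−λ)I(S,P̃)` holds if and only if
`p_{ij}·∑ₖ p̃_{kj} = p̃_{ij}·∑ₖ p_{kj}` for all `i, j`. -/
theorem stmt11 (d m n : ℕ)
    (p : Fin m → ℝ) (hp : ∀ i, 0 ≤ p i) (hp1 : ∑ i, p i = 1)
    (ρ : Fin m → Matrix (Fin d) (Fin d) ℂ)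
    (hρ : ∀ i, (ρ i).PosSemidef ∧ (ρ i).trace = 1)
    (P Pt : Fin n → Matrix (Fin d) (Fin d) ℂ)
    (hP : ∀ j, (P j).PosSemidef) (hPsum : ∑ j, P j = 1)
    (hPt : ∀ j, (Pt j).PosSemidef) (hPtsum : ∑ j, Pt j = 1)
    (l : ℝ) (hl : l ∈ Set.Ioo (0:ℝ) 1) :
    (mutualInfo p ρ (fun j => l • P j + (1 - l) • Pt j)
        = l * mutualInfo p ρ P + (1 - l) * mutualInfo p ρ Pt)
      ↔ ∀ (i : Fin m) (j : Fin n),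
          (p i * ((P j * ρ i).trace).re) * (∑ k, p k * ((Pt j * ρ k).trace).re)
            = (p i * ((Pt j * ρ i).trace).re) * (∑ k, p k * ((P j * ρ k).trace).re) := by
  obtain ⟨hl0, hl1⟩ := hl
  have hQsum : ∑ j, (l • P j + (1 - l) • Pt j) = 1 := by
    rw [Finset.sum_add_distrib, ← Finset.smul_sum, ← Finset.smul_sum, hPsum, hPtsum,
      ← add_smul]
    norm_num
  have hmix : ∀ (i : Fin m) (j : Fin n),
      p i * (((l • P j + (1 - l) • Pt j) * ρ i).trace).re
        = l * (p i * ((P j * ρ i).trace).re) + (1 - l) * (p i * ((Pt j * ρ i).trace).re) := by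
    intro i j
    rw [Matrix.add_mul, Matrix.smul_mul, Matrix.smul_mul, Matrix.trace_add,
      Matrix.trace_smul, Matrix.trace_smul]
    simp only [Complex.add_re, Complex.smul_re, smul_eq_mul]
    ring
  have hq : ∀ (i : Fin m) (j : Fin n), 0 ≤ p i * ((P j * ρ i).trace).re := fun i j =>
    mul_nonneg (hp i) (trace_mul_re_nonneg' (hP j) (hρ i).1)
  have hqt : ∀ (i : Fin m) (j : Fin n), 0 ≤ p i * ((Pt j * ρ i).trace).re := fun i j =>
    mul_nonneg (hp i) (trace_mul_re_nonneg' (hPt j) (hρ i).1)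
  rw [mi_eq p ρ (fun i => (hρ i).2) _ hQsum, mi_eq p ρ (fun i => (hρ i).2) P hPsum,
    mi_eq p ρ (fun i => (hρ i).2) Pt hPtsum]
  simp only [hmix]
  exact abstract m n l hl0 hl1 (fun i j => p i * ((P j * ρ i).trace).re)
    (fun i j => p i * ((Pt j * ρ i).trace).re) hq hqt (∑ i, H (p i)) (Real.log 2)
    (Real.log_pos one_lt_two)
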